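/- For X extensible, if 1 ≤ i ≤ n−d+1 then a_{n−i+1} ≡ −iΔ modulo det(C(X_n)), where (a_i) is the sequence satisfying (−Δ)ω_i^{(n)} ≡ a_i ω_n^{(n)} mod Q(X_n). Equivalently, a_{n−i+1} = det(C(X_{n−i})) = det(C(X_n)) − iΔ. -/

import Mathlib

open scoped BigOperators

def Xmat (d : ℕ) (C : Matrix (Fin d) (Fin d) ℤ) (n : ℕ) : Matrix (Fin n) (Fin n) ℤ :=
  Matrix.of fun i j =>
    if h : (i : ℕ) < d ∧ (j : ℕ) < d then C ⟨i, h.1⟩ ⟨j, h.2⟩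
    else if (i : ℕ) = (j : ℕ) then 2
    else if (i : ℕ) + 1 = (j : ℕ) ∨ (j : ℕ) + 1 = (i : ℕ) then -1
    else 0

def detX (d : ℕ) (C : Matrix (Fin d) (Fin d) ℤ) (n : ℕ) : ℤ := (Xmat d C n).det

def Δdiff (d : ℕ) (C : Matrix (Fin d) (Fin d) ℤ) : ℤ := detX d C d - detX d C (d - 1)

def Extensible (d : ℕ) (C : Matrix (Fin d) (Fin d) ℤ) : Prop :=
  Δdiff d C ≠ 0 ∧ detX d C d ≠ 0 ∧ IsCoprime (Δdiff d C) (detX d C d)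

def fw (n : ℕ) (i : Fin n) : Fin n → ℤ := Pi.single i 1

def col (d : ℕ) (C : Matrix (Fin d) (Fin d) ℤ) (n : ℕ) (j : Fin n) : Fin n → ℤ :=
  fun i => Xmat d C n i j

def Qlat (d : ℕ) (C : Matrix (Fin d) (Fin d) ℤ) (n : ℕ) : Submodule ℤ (Fin n → ℤ) :=
  Submodule.span ℤ (Set.range (col d C n))

def lastFin (n : ℕ) (h : 0 < n) : Fin n := ⟨n - 1, by omega⟩

def ASeq (d : ℕ) (C : Matrix (Fin d) (Fin d) ℤ) (a : ℕ → ℤ) : Prop :=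
  ∀ n, d ≤ n → detX d C n ≠ 0 → ∀ i : Fin n,
    (-(Δdiff d C)) • fw n i - a (i : ℕ) • fw n (lastFin n i.pos) ∈ Qlat d C n

/-! For `m + 1 ≥ d` the last row and column of `C(X_{m+2})` are those of the type `A` tail, so
cofactor expansion gives `δ_{m+2} = 2 δ_{m+1} - δ_m` for `δ_m := det C(X_m)`: from `m = d - 1` on,
the `δ_m` form an arithmetic progression with difference `Δ`.

In `ℤ^m` the tail columns give `e_j ≡ (m - j) e_{m-1}` modulo `Q(X_m)` for `d - 1 ≤ j < m`, so the
defining congruence of `a_j` becomes `(a_j - δ_j) e_{m-1} ∈ Q(X_m)`. Applying the adjugate shows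
`δ_m ∣ (a_j - δ_j) δ_{m-1}`, and `δ_m`, `δ_{m-1}` are coprime since they differ by `Δ`, which is
coprime to every `δ_m` (`m ≥ d`). As `Δ ≠ 0`, `|δ_m|` is unbounded, hence `a_j = δ_j`. -/

open scoped Matrix

theorem Matrix.det_eq_of_last_row_col_eq_zero {R : Type*} [CommRing R] {n : ℕ}
    (M : Matrix (Fin (n + 2)) (Fin (n + 2)) R)
    (hrow : ∀ j : Fin n, M (Fin.last _) j.castSucc.castSucc = 0)
    (hcol : ∀ i : Fin n, M i.castSucc.castSucc (Fin.last _) = 0) :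
    M.det = M (Fin.last _) (Fin.last _) * (M.submatrix Fin.castSucc Fin.castSucc).det -
      M (Fin.last _) (Fin.last n).castSucc * M (Fin.last n).castSucc (Fin.last _) *
        (M.submatrix (Fin.castSucc ∘ Fin.castSucc) (Fin.castSucc ∘ Fin.castSucc)).det := by
  have hsucc : (Fin.last n).castSucc.succAbove ∘ Fin.castSucc = Fin.castSucc ∘ Fin.castSucc :=
    funext fun k => Fin.succAbove_of_castSucc_lt _ _
      (Fin.castSucc_lt_castSucc_iff.2 (Fin.castSucc_lt_last k))
  rw [det_succ_row M (Fin.last _), Fin.sum_univ_castSucc, Fin.sum_univ_castSucc]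
  simp only [hrow, mul_zero, zero_mul, Finset.sum_const_zero, zero_add, Fin.succAbove_last]
  rw [det_succ_column _ (Fin.last n), Fin.sum_univ_castSucc]
  simp only [Fin.val_last, Fin.val_castSucc, odd_add_one_self, Odd.neg_one_pow, Even.add_self,
    Even.neg_pow, one_pow, neg_mul, one_mul, zero_mul, mul_zero, zero_add, submatrix_apply, ne_eq,
    Fin.castSucc_ne_last, not_false_eq_true, Fin.succAbove_ne_last_last, hcol, Fin.succAbove_last,
    submatrix_submatrix, hsucc, Finset.sum_const_zero]
  ring

theorem Matrix.dvd_mul_adjugate_of_mulVec_eq_smul_single {R : Type*} [CommRing R] {ι : Type*}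
    [Fintype ι] [DecidableEq ι] {M : Matrix ι ι R} {x : ι → R} {s : R} {k : ι}
    (hx : M *ᵥ x = s • Pi.single k 1) :
    M.det ∣ s * M.adjugate k k := by
  have h := congrFun (congrArg (M.adjugate *ᵥ ·) hx) k
  simp only [mulVec_mulVec, adjugate_mul, smul_mulVec, one_mulVec, mulVec_smul] at h
  refine ⟨x k, ?_⟩
  simpa [mulVec_single] using h.symm

lemma Int.exists_abs_lt_abs_add_mul {Δ : ℤ} (hΔ : Δ ≠ 0) (c s : ℤ) :
    ∃ k : ℕ, |s| < |c + k * Δ| := by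
  refine ⟨s.natAbs + c.natAbs + 1, ?_⟩
  have hk : (↑(s.natAbs + c.natAbs + 1) : ℤ) ≤ |↑(s.natAbs + c.natAbs + 1) * Δ| := by
    rw [abs_mul, Nat.abs_cast]
    exact le_mul_of_one_le_right (by positivity) (Int.one_le_abs hΔ)
  have htri := abs_sub (c + ↑(s.natAbs + c.natAbs + 1) * Δ) c
  rw [add_sub_cancel_left] at htri
  push_cast at hk htri ⊢
  linarith

section Tail

variable {d : ℕ} {C : Matrix (Fin d) (Fin d) ℤ}

lemma Xmat_submatrix_castSucc (n : ℕ) :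
    (Xmat d C (n + 1)).submatrix Fin.castSucc Fin.castSucc = Xmat d C n :=
  rfl

lemma Xmat_apply_of_tail {n : ℕ} (i j : Fin n) (h : d ≤ i ∨ d ≤ j) :
    Xmat d C n i j =
      if (i : ℕ) = j then 2 else if (i : ℕ) + 1 = j ∨ (j : ℕ) + 1 = i then -1 else 0 :=
  dif_neg (by omega)

lemma detX_add_two {x : ℕ} (hx : d ≤ x + 1) :
    detX d C (x + 2) = 2 * detX d C (x + 1) - detX d C x := by
  have hrec := (Xmat d C (x + 2)).det_eq_of_last_row_col_eq_zero
    (fun j => by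
      rw [Xmat_apply_of_tail _ _ (by simp; omega)]; simp only [Fin.val_last, Fin.val_castSucc]
      split_ifs <;> omega)
    (fun i => by
      rw [Xmat_apply_of_tail _ _ (by simp; omega)]; simp only [Fin.val_last, Fin.val_castSucc]
      split_ifs <;> omega)
  rw [Xmat_apply_of_tail _ _ (by simp; omega), Xmat_apply_of_tail _ _ (by simp; omega),
    Xmat_apply_of_tail _ _ (by simp; omega), ← Matrix.submatrix_submatrix,
    Xmat_submatrix_castSucc, Xmat_submatrix_castSucc] at hrec
  simp only [Fin.val_last, Fin.val_castSucc, Nat.add_eq_left, one_ne_zero, or_true, true_or,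
    ↓reduceIte, Nat.left_eq_add] at hrec
  rw [detX, hrec, detX, detX]
  ring

lemma Extensible.pos (hX : Extensible d C) : 0 < d := by
  rcases d with _ | d
  · exact absurd (sub_self _) hX.1
  · exact d.succ_pos

lemma detX_succ (hd : 0 < d) {x : ℕ} (hx : d ≤ x + 1) :
    detX d C (x + 1) = detX d C x + Δdiff d C := by
  induction x, (show d - 1 ≤ x by omega) using Nat.le_induction with
  | base => rw [Δdiff, Nat.sub_add_cancel hd]; ring
  | succ x hx' ih => rw [detX_add_two (by omega), ih (by omega)]; ring

lemma detX_add_mul (hd : 0 < d) {x : ℕ} (hx : d ≤ x + 1) (k : ℕ) :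
    detX d C (x + k) = detX d C x + k * Δdiff d C := by
  induction k with
  | zero => simp
  | succ k ih => rw [← add_assoc, detX_succ hd (by omega), ih]; push_cast; ring

lemma Extensible.isCoprime_Δdiff_detX (hX : Extensible d C) {m : ℕ} (hm : d ≤ m) :
    IsCoprime (Δdiff d C) (detX d C m) := by
  obtain ⟨k, rfl⟩ := Nat.exists_eq_add_of_le hm
  rw [detX_add_mul hX.pos (by omega), mul_comm]
  exact hX.2.2.add_mul_left_right k

lemma Extensible.isCoprime_detX_succ (hX : Extensible d C) {m : ℕ} (hm : d ≤ m + 1) :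
    IsCoprime (detX d C (m + 1)) (detX d C m) := by
  have h := (hX.isCoprime_Δdiff_detX hm).symm.neg_right.add_mul_left_right 1
  rw [detX_succ hX.pos hm] at h ⊢
  simpa using h

lemma Qlat_eq_range (n : ℕ) : Qlat d C n = LinearMap.range (Xmat d C n).mulVecLin := by
  rw [Matrix.range_mulVecLin]
  rfl

lemma col_mem_Qlat {n : ℕ} (j : Fin n) : col d C n j ∈ Qlat d C n :=
  Submodule.subset_span ⟨j, rfl⟩

lemma detX_dvd_mul_of_smul_single_last_mem {m : ℕ} {s : ℤ}
    (h : s • Pi.single (Fin.last m) 1 ∈ Qlat d C (m + 1)) :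
    detX d C (m + 1) ∣ s * detX d C m := by
  rw [Qlat_eq_range] at h
  obtain ⟨x, hx⟩ := h
  have hdvd := Matrix.dvd_mul_adjugate_of_mulVec_eq_smul_single hx
  rwa [Matrix.adjugate_fin_succ_eq_det_submatrix, Fin.succAbove_last, Xmat_submatrix_castSucc,
    Even.neg_one_pow ⟨_, rfl⟩, one_mul] at hdvd

-- `0` when `n ≤ j`, so that `natSingle n n` stands for the missing neighbour of the last node.
def natSingle (n j : ℕ) : Fin n → ℤ := fun k => if (k : ℕ) = j then 1 else 0

lemma natSingle_of_le {n j : ℕ} (h : n ≤ j) : natSingle n j = 0 := by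
  ext k
  simp only [natSingle, Pi.zero_apply, ite_eq_right_iff]
  omega

lemma col_eq_natSingle {n j : ℕ} (hj : d ≤ j + 1) (hjn : j + 1 < n) :
    col d C n ⟨j + 1, hjn⟩ =
      (2 : ℤ) • natSingle n (j + 1) - natSingle n j - natSingle n (j + 2) := by
  ext k
  simp only [col, Xmat_apply_of_tail k ⟨j + 1, hjn⟩ (Or.inr hj), natSingle, Pi.sub_apply,
    Pi.smul_apply, smul_eq_mul]
  split_ifs <;> omega

lemma natSingle_sub_mem_Qlat {n : ℕ} (k : ℕ) (hk : k ≤ n) (hd : d ≤ n - k + 1) :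
    natSingle n (n - k) - (k : ℤ) • natSingle n (n - 1) ∈ Qlat d C n := by
  induction k using Nat.twoStepInduction with
  | zero => simp [natSingle_of_le le_rfl]
  | one => simp
  | more k ih₀ ih₁ =>
    obtain ⟨j, rfl⟩ : ∃ j, n = j + k + 2 := ⟨n - (k + 2), by omega⟩
    have h := sub_mem (sub_mem (Submodule.smul_mem _ (2 : ℤ) (ih₁ (by omega) (by omega)))
      (ih₀ (by omega) (by omega))) (col_mem_Qlat (C := C) ⟨j + 1, by omega⟩)
    rw [col_eq_natSingle (by omega)] at h
    convert h using 1
    rw [show j + k + 2 - (k + 2) = j by omega, show j + k + 2 - (k + 1) = j + 1 by omega,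
      show j + k + 2 - k = j + 2 by omega]
    ext i
    simp only [Pi.sub_apply, Pi.smul_apply, smul_eq_mul]
    push_cast
    ring

lemma ASeq.detX_dvd_sub {a : ℕ → ℤ} (ha : ASeq d C a) (hX : Extensible d C) {j m : ℕ}
    (hj : d ≤ j + 1) (hjm : j < m) (hm : detX d C m ≠ 0) :
    detX d C m ∣ a j - detX d C j := by
  obtain ⟨m, rfl⟩ : ∃ m', m = m' + 1 := ⟨m - 1, by omega⟩
  have hrel := ha (m + 1) (by omega) hm ⟨j, hjm⟩
  have htail := natSingle_sub_mem_Qlat (C := C) (n := m + 1) (m + 1 - j) (by omega) (by omega)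
  have hdetj : detX d C j = detX d C (m + 1) - ((m + 1 - j : ℕ) : ℤ) * Δdiff d C := by
    have h := detX_add_mul (C := C) hX.pos hj (m + 1 - j)
    rw [Nat.add_sub_cancel' hjm.le] at h
    linarith
  have hlast : (detX d C j - a j - detX d C (m + 1)) • Pi.single (Fin.last m) 1 ∈
      Qlat d C (m + 1) := by
    convert add_mem hrel (Submodule.smul_mem _ (Δdiff d C) htail) using 1
    rw [hdetj, show m + 1 - (m + 1 - j) = j by omega]
    ext i
    simp only [fw, lastFin, natSingle, Pi.single_apply, Fin.ext_iff, Fin.val_last,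
      add_tsub_cancel_right, Pi.add_apply, Pi.sub_apply, Pi.smul_apply, smul_eq_mul, mul_ite,
      mul_one, mul_zero]
    split_ifs <;> ring
  have hdvd := detX_dvd_mul_of_smul_single_last_mem hlast
  refine (hX.isCoprime_detX_succ (by omega)).dvd_of_dvd_mul_right ?_
  convert (dvd_neg.mpr hdvd).sub (dvd_mul_right (detX d C (m + 1)) (detX d C m)) using 1
  ring

lemma ASeq.eq_detX {a : ℕ → ℤ} (ha : ASeq d C a) (hX : Extensible d C) {j : ℕ}
    (hj : d ≤ j + 1) : a j = detX d C j := by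
  obtain ⟨k, hk⟩ :=
    Int.exists_abs_lt_abs_add_mul hX.1 (detX d C (j + 1)) (a j - detX d C j)
  rw [← detX_add_mul hX.pos (by omega)] at hk
  have hdvd := ha.detX_dvd_sub hX hj (by omega : j < j + 1 + k)
    (fun h => by rw [h, abs_zero] at hk; exact (abs_nonneg _).not_gt hk)
  exact sub_eq_zero.mp (Int.eq_zero_of_abs_lt_dvd ((abs_dvd _ _).mpr hdvd) hk)

end Tail

-- The paper's `a_{n-i+1}` is `a (n - i)`: the sequence `a` is indexed from `0`.
theorem tensor_stab_a_tail_general (d : ℕ)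
    (C : Matrix (Fin d) (Fin d) ℤ) (hX : Extensible d C)
    (a : ℕ → ℤ) (ha : ASeq d C a)
    (n : ℕ) (hn : d ≤ n) (i : ℕ) (hi2 : i ≤ n - d + 1) :
    a (n - i) = detX d C (n - i) ∧
    detX d C (n - i) = detX d C n - (i : ℤ) * Δdiff d C ∧
    (detX d C n) ∣ (a (n - i) + (i : ℤ) * Δdiff d C) := by
  have hd := hX.pos
  have hj : d ≤ n - i + 1 := by omega
  have ha_eq := ha.eq_detX hX hj
  have hdet : detX d C (n - i) = detX d C n - i * Δdiff d C := by
    have h := detX_add_mul (C := C) hd hj i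
    rw [Nat.sub_add_cancel (by omega)] at h
    linarith
  refine ⟨ha_eq, hdet, ?_⟩
  rw [ha_eq, hdet, sub_add_cancel]

/-- For the sequence `(a_i)` of the congruence property and `1 ≤ i ≤ n-d+1`:
`a_{n-i+1} = det(C(X_{n-i})) = det(C(X_n)) - i·Δ`, so in particular
`a_{n-i+1} ≡ -i·Δ (mod det C(X_n))`.  (In 0-based indexing the paper's
`a_{n-i+1}` is `a (n-i)`.) -/
theorem tensor_stab_a_tail (d : ℕ) (hd : 1 ≤ d)
    (C : Matrix (Fin d) (Fin d) ℤ) (hX : Extensible d C)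
    (a : ℕ → ℤ) (ha : ASeq d C a)
    (n : ℕ) (hn : d ≤ n) (i : ℕ) (hi1 : 1 ≤ i) (hi2 : i ≤ n - d + 1) :
    a (n - i) = detX d C (n - i) ∧
    detX d C (n - i) = detX d C n - (i : ℤ) * Δdiff d C ∧
    (detX d C n) ∣ (a (n - i) + (i : ℤ) * Δdiff d C) :=
  tensor_stab_a_tail_general d C hX a ha n hn i hi2
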